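/- For every x ∈ X and every non-zero ordinal α ∈ [‖x‖,λ), the set V_α(x) is closed in the topological space (X,τ). -/

import Mathlib

universe u v

open Ordinal Set Topology Cardinal

namespace LawsonExample

def Xset (lam : Cardinal.{u}) : Set (Ordinal.{u} → Fin 3) :=
  {x | (∀ γ : Ordinal.{u}, lam.ord ≤ γ → x γ = 2) ∧ {γ : Ordinal.{u} | x γ ≠ 2}.Finite}

noncomputable def nrm (x : Ordinal.{u} → Fin 3) : Ordinal.{u} :=
  sInf {α | ∀ γ, α ≤ γ → x γ = 2}

noncomputable def Vnbhd (lam : Cardinal.{u}) (x : ↥(Xset lam)) (α : Ordinal.{u}) :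
    Set ↥(Xset lam) :=
  if x.1 0 = 2 then {x}
  else if x.1 0 = 1 then
    {y | (∀ γ, 1 ≤ γ → γ < α → y.1 γ = x.1 γ) ∧
         (∀ γ, α ≤ γ → γ < lam.ord → y.1 γ ≠ 1) ∧
         (y.1 0 = 1 ∨ (y.1 0 = 2 ∧ α < nrm y.1))}
  else
    {y | (∀ γ, 1 ≤ γ → γ < α → y.1 γ = x.1 γ) ∧
         (y.1 0 = 0 ∨ (y.1 0 = 2 ∧ α < nrm y.1 ∧ y.1 (Ordinal.pred (nrm y.1)) = 1))}

def tauSet (lam : Cardinal.{u}) : Set (Set ↥(Xset lam)) :=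
  {U | ∀ x ∈ U, ∃ α : Ordinal.{u}, nrm x.1 ≤ α ∧ α < lam.ord ∧ Vnbhd lam x α ⊆ U}

lemma nrm_spec {lam : Cardinal.{u}} (x : ↥(Xset lam)) {γ : Ordinal.{u}}
    (h : nrm x.1 ≤ γ) : x.1 γ = 2 := by
  have hne : {α : Ordinal.{u} | ∀ γ, α ≤ γ → x.1 γ = 2}.Nonempty :=
    ⟨lam.ord, fun γ hγ => x.2.1 γ hγ⟩
  exact csInf_mem hne γ h

lemma nrm_lt {lam : Cardinal.{u}} (hlam : ℵ₀ ≤ lam) (x : ↥(Xset lam)) :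
    nrm x.1 < lam.ord := by
  have hlim : Order.IsSuccLimit (lam.ord) := Cardinal.isSuccLimit_ord hlam
  rcases eq_empty_or_nonempty {γ | x.1 γ ≠ 2} with he | hne
  · have h0 : nrm x.1 ≤ 0 := csInf_le' (fun γ _ => by
      by_contra hc
      exact (eq_empty_iff_forall_notMem.1 he γ) hc)
    exact lt_of_le_of_lt h0 hlim.pos
  · set m := sSup {γ | x.1 γ ≠ 2} with hm_def
    have hmem : m ∈ {γ | x.1 γ ≠ 2} := hne.csSup_mem x.2.2
    have hm : m < lam.ord := lt_of_not_ge fun h => hmem (x.2.1 m h)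
    have hb : nrm x.1 ≤ m + 1 := csInf_le' (fun γ hγ => by
      by_contra hc
      have hle : γ ≤ m := le_csSup x.2.2.bddAbove hc
      rw [Ordinal.add_one_eq_succ] at hγ
      exact absurd hγ (not_le.2 (lt_of_le_of_lt hle (Order.lt_succ m))))
    have : m + 1 < lam.ord := by
      rw [Ordinal.add_one_eq_succ]; exact hlim.succ_lt hm
    exact lt_of_le_of_lt hb this

lemma fin3_cases (a : Fin 3) : a = 0 ∨ a = 1 ∨ a = 2 := by revert a; decide

lemma mem_Vnbhd_self {lam : Cardinal.{u}} (x : ↥(Xset lam)) {α : Ordinal.{u}}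
    (h : nrm x.1 ≤ α) : x ∈ Vnbhd lam x α := by
  rcases fin3_cases (x.1 0) with h0 | h0 | h0
  · have h2 : x.1 0 ≠ 2 := by rw [h0]; decide
    have h1 : x.1 0 ≠ 1 := by rw [h0]; decide
    rw [Vnbhd, if_neg h2, if_neg h1]
    exact ⟨fun γ _ _ => rfl, Or.inl h0⟩
  · have h2 : x.1 0 ≠ 2 := by rw [h0]; decide
    rw [Vnbhd, if_neg h2, if_pos h0]
    refine ⟨fun γ _ _ => rfl, fun γ hγ _ => ?_, Or.inl h0⟩
    rw [nrm_spec x (le_trans h hγ)]; decide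
  · rw [Vnbhd, if_pos h0]; exact rfl

lemma Vnbhd_mono {lam : Cardinal.{u}} (x : ↥(Xset lam)) {α β : Ordinal.{u}}
    (hα : nrm x.1 ≤ α) (hαβ : α ≤ β) : Vnbhd lam x β ⊆ Vnbhd lam x α := by
  rcases fin3_cases (x.1 0) with h0 | h0 | h0
  · have h2 : x.1 0 ≠ 2 := by rw [h0]; decide
    have h1 : x.1 0 ≠ 1 := by rw [h0]; decide
    rw [Vnbhd, Vnbhd, if_neg h2, if_neg h1, if_neg h2, if_neg h1]
    rintro y ⟨hr, hy⟩
    refine ⟨fun γ h1γ h2γ => hr γ h1γ (lt_of_lt_of_le h2γ hαβ), ?_⟩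
    rcases hy with hy | ⟨hy2, hylt, hyp⟩
    · exact Or.inl hy
    · exact Or.inr ⟨hy2, lt_of_le_of_lt hαβ hylt, hyp⟩
  · have h2 : x.1 0 ≠ 2 := by rw [h0]; decide
    rw [Vnbhd, Vnbhd, if_neg h2, if_pos h0, if_neg h2, if_pos h0]
    rintro y ⟨hr, hns, hy⟩
    have hα1 : 1 ≤ α := by
      by_contra hc
      have : α = 0 := Ordinal.lt_one_iff_zero.1 (not_le.1 hc)
      have : x.1 0 = 2 := nrm_spec x (by rw [← this]; exact hα)
      exact h2 this
    refine ⟨fun γ h1γ h2γ => hr γ h1γ (lt_of_lt_of_le h2γ hαβ), ?_, ?_⟩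
    · intro γ hγ hγlt
      by_cases hγβ : β ≤ γ
      · exact hns γ hγβ hγlt
      · have h1γ : 1 ≤ γ := le_trans hα1 hγ
        rw [hr γ h1γ (not_le.1 hγβ)]
        rw [nrm_spec x (le_trans hα hγ)]
        decide
    · rcases hy with hy | ⟨hy2, hylt⟩
      · exact Or.inl hy
      · exact Or.inr ⟨hy2, lt_of_le_of_lt hαβ hylt⟩
  · rw [Vnbhd, Vnbhd, if_pos h0, if_pos h0]

noncomputable def tau (lam : Cardinal.{u}) (hlam : ℵ₀ ≤ lam) :
    TopologicalSpace ↥(Xset lam) where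
  IsOpen U := U ∈ tauSet lam
  isOpen_univ := fun x _ =>
    ⟨nrm x.1, le_rfl, nrm_lt hlam x, subset_univ _⟩
  isOpen_inter := by
    intro U V hU hV x hx
    obtain ⟨α, hα1, hα2, hα3⟩ := hU x hx.1
    obtain ⟨β, hβ1, hβ2, hβ3⟩ := hV x hx.2
    refine ⟨max α β, le_trans hα1 (le_max_left _ _), max_lt hα2 hβ2, fun y hy => ?_⟩
    exact ⟨hα3 (Vnbhd_mono x hα1 (le_max_left _ _) hy),
           hβ3 (Vnbhd_mono x hβ1 (le_max_right _ _) hy)⟩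
  isOpen_sUnion := by
    intro S hS x hx
    obtain ⟨U, hU, hxU⟩ := hx
    obtain ⟨α, hα1, hα2, hα3⟩ := hS U hU x hxU
    exact ⟨α, hα1, hα2, fun y hy => ⟨U, hU, hα3 hy⟩⟩


/-- The semilattice operation of `X`: pointwise minimum. -/
noncomputable def pmin (lam : Cardinal.{u}) (x y : ↥(Xset lam)) : ↥(Xset lam) :=
  ⟨fun γ => min (x.1 γ) (y.1 γ), by
    constructor
    · intro γ hγ
      show min (x.1 γ) (y.1 γ) = 2
      rw [x.2.1 γ hγ, y.2.1 γ hγ, min_self]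
    · refine (x.2.2.union y.2.2).subset fun γ hγ => ?_
      have hγ' : min (x.1 γ) (y.1 γ) ≠ 2 := hγ
      simp only [mem_union, mem_setOf_eq]
      by_contra hc
      push_neg at hc
      rw [hc.1, hc.2, min_self] at hγ'
      exact hγ' rfl⟩

/-- `B` is a base of the topology `t`: it consists of open sets, and every open set is a
union of members of `B`. -/
def IsBase {X : Type v} (t : TopologicalSpace X) (B : Set (Set X)) : Prop :=
  (∀ U ∈ B, IsOpen[t] U) ∧ ∀ U, IsOpen[t] U → ∃ S ⊆ B, U = ⋃₀ S

/-- The family `ℬ = {V_α(x) : x ∈ X, α ∈ [‖x‖, λ)}`. -/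
def Vfamily (lam : Cardinal.{u}) : Set (Set ↥(Xset lam)) :=
  {W | ∃ (x : ↥(Xset lam)) (α : Ordinal.{u}), nrm x.1 ≤ α ∧ α < lam.ord ∧ W = Vnbhd lam x α}

/-- The weight of a topological space: the smallest cardinality of a base of its topology. -/
noncomputable def weight {X : Type v} (t : TopologicalSpace X) : Cardinal.{v} :=
  sInf {c : Cardinal.{v} | ∃ B : Set (Set X), IsBase t B ∧ c = Cardinal.mk ↥B}

/-- The function `𝟎_β`, with `𝟎_β β = 0` and `𝟎_β γ = 2` for `γ ≠ β`. -/
noncomputable def zeroF (β : Ordinal.{u}) : Ordinal.{u} → Fin 3 :=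
  fun γ => if γ = β then 0 else 2

/-- The function `𝟏_β`, with `𝟏_β β = 1` and `𝟏_β γ = 2` for `γ ≠ β`. -/
noncomputable def oneF (β : Ordinal.{u}) : Ordinal.{u} → Fin 3 :=
  fun γ => if γ = β then 1 else 2

lemma zeroF_mem (lam : Cardinal.{u}) {β : Ordinal.{u}} (h : β < lam.ord) :
    zeroF β ∈ Xset lam := by
  constructor
  · intro γ hγ
    have hne : γ ≠ β := fun e => absurd h (not_lt.2 (e ▸ hγ))
    simp [zeroF, hne]
  · refine (finite_singleton β).subset fun γ hγ => ?_
    simp only [mem_setOf_eq, zeroF] at hγ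
    by_contra hc
    simp only [mem_singleton_iff] at hc
    rw [if_neg hc] at hγ
    exact hγ rfl

lemma oneF_mem (lam : Cardinal.{u}) {β : Ordinal.{u}} (h : β < lam.ord) :
    oneF β ∈ Xset lam := by
  constructor
  · intro γ hγ
    have hne : γ ≠ β := fun e => absurd h (not_lt.2 (e ▸ hγ))
    simp [oneF, hne]
  · refine (finite_singleton β).subset fun γ hγ => ?_
    simp only [mem_setOf_eq, oneF] at hγ
    by_contra hc
    simp only [mem_singleton_iff] at hc
    rw [if_neg hc] at hγ
    exact hγ rfl

/-- `𝟎_β` as an element of `X` (for `β < λ`). -/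
noncomputable def zeroE (lam : Cardinal.{u}) {β : Ordinal.{u}} (h : β < lam.ord) :
    ↥(Xset lam) := ⟨zeroF β, zeroF_mem lam h⟩

/-- `𝟏_β` as an element of `X` (for `β < λ`). -/
noncomputable def oneE (lam : Cardinal.{u}) {β : Ordinal.{u}} (h : β < lam.ord) :
    ↥(Xset lam) := ⟨oneF β, oneF_mem lam h⟩

/-! The complement of `V_α(x)` is open: if `z ∉ V_α(x)`, then `V_β(z)` misses `V_α(x)` for
`β = max ‖z‖ α`. A common point `y` is impossible when `x` and `z` lie in different pieces
`X_0`, `X_1`: then `y ∈ X_2`, and the last point of its support is a `1` at or above `β`.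
When they lie in the same piece, `y` transfers the agreement with `x` on `[1, α)` to `z`, and in
the `X_1` case also the absence of `1`s above `α`, since those of `z` lie below `‖z‖ ≤ β`. -/

section

variable {lam : Cardinal.{u}}

lemma Vnbhd_eq_singleton_of_eq_two {x : ↥(Xset lam)} (hx : x.1 0 = 2) (α : Ordinal.{u}) :
    Vnbhd lam x α = {x} :=
  if_pos hx

lemma mem_Vnbhd_iff_of_eq_one {x y : ↥(Xset lam)} (hx : x.1 0 = 1) {α : Ordinal.{u}} :
    y ∈ Vnbhd lam x α ↔ (∀ γ, 1 ≤ γ → γ < α → y.1 γ = x.1 γ) ∧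
      (∀ γ, α ≤ γ → γ < lam.ord → y.1 γ ≠ 1) ∧ (y.1 0 = 1 ∨ (y.1 0 = 2 ∧ α < nrm y.1)) := by
  rw [Vnbhd, if_neg (by simp [hx]), if_pos hx]
  rfl

lemma mem_Vnbhd_iff_of_eq_zero {x y : ↥(Xset lam)} (hx : x.1 0 = 0) {α : Ordinal.{u}} :
    y ∈ Vnbhd lam x α ↔ (∀ γ, 1 ≤ γ → γ < α → y.1 γ = x.1 γ) ∧
      (y.1 0 = 0 ∨ (y.1 0 = 2 ∧ α < nrm y.1 ∧ y.1 (Ordinal.pred (nrm y.1)) = 1)) := by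
  rw [Vnbhd, if_neg (by simp [hx]), if_neg (by simp [hx])]
  rfl

lemma lt_nrm_of_ne_two (y : ↥(Xset lam)) {γ : Ordinal.{u}} (h : y.1 γ ≠ 2) : γ < nrm y.1 :=
  lt_of_not_ge fun hγ => h (nrm_spec y hγ)

lemma lt_ord_of_ne_two (y : ↥(Xset lam)) {γ : Ordinal.{u}} (h : y.1 γ ≠ 2) : γ < lam.ord :=
  lt_of_not_ge fun hγ => h (y.2.1 γ hγ)

lemma le_pred_of_lt {o β : Ordinal.{u}} (ho : Ordinal.pred o < o) (hβ : β < o) :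
    β ≤ Ordinal.pred o := by
  have hsucc : Order.succ (Ordinal.pred o) = o :=
    Ordinal.succ_pred_eq_iff_not_isSuccPrelimit.2 (Ordinal.pred_lt_iff_not_isSuccPrelimit.1 ho)
  exact Order.le_of_lt_succ (hβ.trans_eq hsucc.symm)

lemma apply_eq_of_mem_Vnbhd {z y : ↥(Xset lam)} (hz : z.1 0 ≠ 2) {β : Ordinal.{u}}
    (hy : y ∈ Vnbhd lam z β) : ∀ γ, 1 ≤ γ → γ < β → y.1 γ = z.1 γ := by
  rw [Vnbhd, if_neg hz] at hy
  split_ifs at hy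
  exacts [hy.1, hy.1]

lemma lt_nrm_of_mem_Vnbhd {z y : ↥(Xset lam)} (hz : z.1 0 ≠ 2) {β : Ordinal.{u}}
    (hy : y ∈ Vnbhd lam z β) (hy2 : y.1 0 = 2) : β < nrm y.1 := by
  rw [Vnbhd, if_neg hz] at hy
  split_ifs at hy
  · obtain ⟨-, -, hy0 | ⟨-, hβ⟩⟩ := hy
    exacts [absurd (hy2.symm.trans hy0) (by decide), hβ]
  · obtain ⟨-, hy0 | ⟨-, hβ, -⟩⟩ := hy
    exacts [absurd (hy2.symm.trans hy0) (by decide), hβ]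

lemma one_le_of_nrm_le {x : ↥(Xset lam)} (hx : x.1 0 ≠ 2) {α : Ordinal.{u}}
    (hα : nrm x.1 ≤ α) : 1 ≤ α :=
  Order.one_le_iff_pos.2 ((lt_nrm_of_ne_two x hx).trans_le hα)

lemma not_mem_Vnbhd_of_pred_nrm_eq_one {x y : ↥(Xset lam)} (hx : x.1 0 = 1) {α : Ordinal.{u}}
    (hα : α < nrm y.1) (hy : y.1 (Ordinal.pred (nrm y.1)) = 1) : y ∉ Vnbhd lam x α := by
  have hy2 : y.1 (Ordinal.pred (nrm y.1)) ≠ 2 := by simp [hy]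
  rw [mem_Vnbhd_iff_of_eq_one hx]
  exact fun h => h.2.1 _ (le_pred_of_lt (lt_nrm_of_ne_two y hy2) hα) (lt_ord_of_ne_two y hy2) hy

lemma disjoint_Vnbhd_of_eq_zero_of_eq_one {x z : ↥(Xset lam)} (hx : x.1 0 = 0)
    (hz : z.1 0 = 1) (α β : Ordinal.{u}) : Disjoint (Vnbhd lam x α) (Vnbhd lam z β) := by
  refine Set.disjoint_left.2 fun y hyx hyz => ?_
  obtain ⟨-, hy0 | ⟨hy2, -, hpred⟩⟩ := (mem_Vnbhd_iff_of_eq_zero hx).1 hyx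
  · obtain ⟨-, -, hy1 | ⟨hy2, -⟩⟩ := (mem_Vnbhd_iff_of_eq_one hz).1 hyz
    exacts [absurd (hy0.symm.trans hy1) (by decide), absurd (hy0.symm.trans hy2) (by decide)]
  · exact not_mem_Vnbhd_of_pred_nrm_eq_one hz
      (lt_nrm_of_mem_Vnbhd (by simp [hz]) hyz hy2) hpred hyz

lemma apply_eq_of_mem_inter {x z y : ↥(Xset lam)} (hx : x.1 0 ≠ 2) (hz : z.1 0 ≠ 2)
    {α β : Ordinal.{u}} (hαβ : α ≤ β) (hyz : y ∈ Vnbhd lam z β) (hyx : y ∈ Vnbhd lam x α) :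
    ∀ γ, 1 ≤ γ → γ < α → z.1 γ = x.1 γ := fun γ h1 hγ =>
  (apply_eq_of_mem_Vnbhd hz hyz γ h1 (hγ.trans_le hαβ)).symm.trans
    (apply_eq_of_mem_Vnbhd hx hyx γ h1 hγ)

lemma mem_Vnbhd_of_eq_zero_of_mem_inter {x z y : ↥(Xset lam)} (hx : x.1 0 = 0)
    (hz : z.1 0 = 0) {α β : Ordinal.{u}} (hαβ : α ≤ β) (hyz : y ∈ Vnbhd lam z β)
    (hyx : y ∈ Vnbhd lam x α) : z ∈ Vnbhd lam x α :=
  (mem_Vnbhd_iff_of_eq_zero hx).2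
    ⟨apply_eq_of_mem_inter (by simp [hx]) (by simp [hz]) hαβ hyz hyx, Or.inl hz⟩

lemma mem_Vnbhd_of_eq_one_of_mem_inter {x z y : ↥(Xset lam)} (hx : x.1 0 = 1)
    (hz : z.1 0 = 1) {α β : Ordinal.{u}} (hxα : nrm x.1 ≤ α) (hzβ : nrm z.1 ≤ β)
    (hαβ : α ≤ β) (hyz : y ∈ Vnbhd lam z β) (hyx : y ∈ Vnbhd lam x α) :
    z ∈ Vnbhd lam x α := by
  have hx2 : x.1 0 ≠ 2 := by simp [hx]
  have hz2 : z.1 0 ≠ 2 := by simp [hz]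
  refine (mem_Vnbhd_iff_of_eq_one hx).2
    ⟨apply_eq_of_mem_inter hx2 hz2 hαβ hyz hyx, fun δ hαδ hδ hzδ => ?_, Or.inl hz⟩
  have hδβ : δ < β := (lt_nrm_of_ne_two z (by simp [hzδ])).trans_le hzβ
  have hyδ : y.1 δ = 1 :=
    (apply_eq_of_mem_Vnbhd hz2 hyz δ ((one_le_of_nrm_le hx2 hxα).trans hαδ) hδβ).trans hzδ
  exact ((mem_Vnbhd_iff_of_eq_one hx).1 hyx).2.1 δ hαδ hδ hyδ

lemma disjoint_Vnbhd_of_not_mem {x z : ↥(Xset lam)} {α β : Ordinal.{u}}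
    (hxα : nrm x.1 ≤ α) (hzβ : nrm z.1 ≤ β) (hαβ : α ≤ β) (hz : z ∉ Vnbhd lam x α) :
    Disjoint (Vnbhd lam z β) (Vnbhd lam x α) := by
  refine Set.disjoint_left.2 fun y hyz hyx => hz ?_
  rcases eq_or_ne (z.1 0) 2 with hz2 | hz2
  · obtain rfl : y = z := (Vnbhd_eq_singleton_of_eq_two hz2 β).subset hyz
    exact hyx
  rcases eq_or_ne (x.1 0) 2 with hx2 | hx2
  · obtain rfl : y = x := (Vnbhd_eq_singleton_of_eq_two hx2 α).subset hyx
    exact absurd (lt_nrm_of_mem_Vnbhd hz2 hyz hx2) (not_lt.2 (hxα.trans hαβ))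
  rcases fin3_cases (z.1 0) with hz0 | hz1 | hz2'
  · rcases fin3_cases (x.1 0) with hx0 | hx1 | hx2'
    · exact mem_Vnbhd_of_eq_zero_of_mem_inter hx0 hz0 hαβ hyz hyx
    · exact ((disjoint_Vnbhd_of_eq_zero_of_eq_one hz0 hx1 β α).notMem_of_mem_left hyz hyx).elim
    · exact absurd hx2' hx2
  · rcases fin3_cases (x.1 0) with hx0 | hx1 | hx2'
    · exact ((disjoint_Vnbhd_of_eq_zero_of_eq_one hx0 hz1 α β).notMem_of_mem_left hyx hyz).elim
    · exact mem_Vnbhd_of_eq_one_of_mem_inter hx1 hz1 hxα hzβ hαβ hyz hyx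
    · exact absurd hx2' hx2
  · exact absurd hz2' hz2

end

theorem isClosed_Vnbhd_general (lam : Cardinal.{u}) (hlam : ℵ₀ ≤ lam) (x : ↥(Xset lam))
    (α : Ordinal.{u}) (hα1 : nrm x.1 ≤ α) (hα2 : α < lam.ord) :
    IsClosed[tau lam hlam] (Vnbhd lam x α) := by
  refine @IsClosed.mk _ (tau lam hlam) _ fun z hz => ?_
  exact ⟨max (nrm z.1) α, le_max_left _ _, max_lt (nrm_lt hlam z) hα2,
    (disjoint_Vnbhd_of_not_mem hα1 (le_max_left _ _) (le_max_right _ _) hz).subset_compl_right⟩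

/-- **Claim 5.** For every `x ∈ X` and every non-zero ordinal `α ∈ [‖x‖, λ)`,
the set `V_α(x)` is closed in the topological space `(X, τ)`. -/
theorem isClosed_Vnbhd (lam : Cardinal.{u}) (hlam : ℵ₀ ≤ lam) (x : ↥(Xset lam))
    (α : Ordinal.{u}) (hα1 : nrm x.1 ≤ α) (hα2 : α < lam.ord) (hα0 : α ≠ 0) :
    IsClosed[tau lam hlam] (Vnbhd lam x α) :=
  isClosed_Vnbhd_general lam hlam x α hα1 hα2

end LawsonExample
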